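/- arXiv:2308.04362 — 3 statements merged into one kernel-verified Lean document; each statement's English description precedes it below -/
import Mathlib

section
/- Σ_{k≥1} ψ₁(k+1)/(k+1) = 2ζ(3) - ζ(2), where ψ₁ is the trigamma function. -/
open scoped Real

noncomputable section

/-- The trigamma function `ψ₁(x) = ∑_{n ≥ 0} 1/(n + x)²`. -/
def trigamma (x : ℝ) : ℝ := ∑' n : ℕ, (1 : ℝ) / (n + x)^2

def zeta3 : ℝ := ∑' n : ℕ, (1 : ℝ) / (n + 1)^3

def zeta2 : ℝ := ∑' n : ℕ, (1 : ℝ) / (n + 1)^2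

open Filter Finset Topology

namespace Stmt5Aux

/-- Partial sums of the harmonic series. -/
def hsum (m : ℕ) : ℝ := ∑ i ∈ Finset.range m, 1/((i:ℝ)+1)

lemma hsum_nonneg (m : ℕ) : 0 ≤ hsum m := by
  apply Finset.sum_nonneg; intro i _; positivity

lemma hsum_succ (m : ℕ) : hsum (m+1) = hsum m + 1/((m:ℝ)+1) := by
  rw [hsum, Finset.sum_range_succ, ← hsum]

lemma hsum_le (m : ℕ) : hsum m ≤ 2 * Real.sqrt m := by
  induction m with
  | zero => simp [hsum]
  | succ n ih =>
    rw [hsum, Finset.sum_range_succ, ← hsum]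
    have h1 : Real.sqrt n ^ 2 = n := Real.sq_sqrt (by positivity)
    have h2 : Real.sqrt (n+1) ^ 2 = (n:ℝ)+1 := Real.sq_sqrt (by positivity)
    have h3 : (1:ℝ) ≤ Real.sqrt ((n:ℝ)+1) := Real.one_le_sqrt.mpr (by linarith)
    have h4 : 0 ≤ Real.sqrt (n:ℝ) := Real.sqrt_nonneg _
    have key : 1/((n:ℝ)+1) ≤ 2 * (Real.sqrt ((n:ℝ)+1) - Real.sqrt n) := by
      rw [div_le_iff₀ (by positivity)]
      nlinarith [sq_nonneg (Real.sqrt ((n:ℝ)+1) - Real.sqrt n)]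
    push_cast
    linarith

lemma fin_tele (f : ℕ → ℝ) (k : ℕ) : ∀ N : ℕ, ∑ n ∈ Finset.range N, (f n - f (n+k))
    = ∑ i ∈ Finset.range k, f i - ∑ i ∈ Finset.range k, f (N+i) := by
  intro N
  induction N with
  | zero => simp
  | succ N ih =>
    rw [Finset.sum_range_succ, ih]
    have key : ∑ i ∈ Finset.range k, (f (N+i) - f (N+(i+1))) = f (N+0) - f (N+k) :=
      Finset.sum_range_sub' (fun j => f (N+j)) k
    have e1 : ∑ i ∈ Finset.range k, f (N+1+i) = ∑ i ∈ Finset.range k, f (N+(i+1)) := by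
      apply Finset.sum_congr rfl; intro i _; ring_nf
    rw [Finset.sum_sub_distrib] at key
    rw [e1]
    simp only [add_zero] at key
    linarith

lemma tele (m : ℕ) : HasSum (fun n : ℕ => 1/(((n:ℝ)+1)*((n:ℝ)+(m:ℝ)+2)))
    (hsum (m+1) / ((m:ℝ)+1)) := by
  rw [hasSum_iff_tendsto_nat_of_nonneg (fun n => by positivity)]
  set f : ℕ → ℝ := fun n => 1/((n:ℝ)+1) with hf
  have term : ∀ n : ℕ, 1/(((n:ℝ)+1)*((n:ℝ)+(m:ℝ)+2)) = (1/((m:ℝ)+1)) * (f n - f (n+(m+1))) := by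
    intro n
    simp only [hf]
    push_cast
    have h1 : ((n:ℝ)+1) ≠ 0 := by positivity
    have h2 : ((n:ℝ)+(m:ℝ)+2) ≠ 0 := by positivity
    have h3 : ((m:ℝ)+1) ≠ 0 := by positivity
    field_simp
    ring_nf
  have psum : ∀ N : ℕ, ∑ n ∈ Finset.range N, 1/(((n:ℝ)+1)*((n:ℝ)+(m:ℝ)+2))
      = (1/((m:ℝ)+1)) * (hsum (m+1) - ∑ i ∈ Finset.range (m+1), f (N+i)) := by
    intro N
    rw [Finset.sum_congr rfl (fun n _ => term n), ← Finset.mul_sum, fin_tele f (m+1) N]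
    rfl
  simp only [psum]
  have htail : Tendsto (fun N : ℕ => ∑ i ∈ Finset.range (m+1), f (N+i)) atTop (𝓝 0) := by
    have h0 : (0:ℝ) = ∑ _i ∈ Finset.range (m+1), (0:ℝ) := by simp
    rw [h0]
    apply tendsto_finset_sum
    intro i _
    have : Tendsto (fun N : ℕ => ((N:ℝ) + ((i:ℝ)+1))⁻¹) atTop (𝓝 0) :=
      tendsto_inv_atTop_zero.comp
        (tendsto_atTop_add_const_right _ _ tendsto_natCast_atTop_atTop)
    apply this.congr
    intro N
    simp only [hf, Function.comp]
    push_cast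
    rw [one_div]
    ring_nf
  have h := (htail.const_sub (hsum (m+1))).const_mul (1/((m:ℝ)+1))
  simp only [sub_zero] at h
  have e : (1/((m:ℝ)+1)) * hsum (m+1) = hsum (m+1) / ((m:ℝ)+1) := by ring
  rwa [e] at h

lemma sq2 : Summable (fun n : ℕ => 1/((n:ℝ)+1)^2) := by
  have := (summable_nat_add_iff 1).mpr (Real.summable_one_div_nat_pow.mpr (by norm_num : 1 < 2))
  apply this.congr
  intro n; push_cast; ring

lemma cube : Summable (fun n : ℕ => 1/((n:ℝ)+1)^3) := by
  have := (summable_nat_add_iff 1).mpr (Real.summable_one_div_nat_pow.mpr (by norm_num : 1 < 3))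
  apply this.congr
  intro n; push_cast; ring

lemma sum_outer : Summable (fun m : ℕ => hsum (m+1) / ((m:ℝ)+1)^2) := by
  have base : Summable (fun m : ℕ => 2 * (1/((m:ℝ)+1)^((3:ℝ)/2))) := by
    have := (summable_nat_add_iff 1).mpr
      (Real.summable_one_div_nat_rpow.mpr (by norm_num : (1:ℝ) < 3/2))
    exact (this.congr (by intro n; push_cast; ring_nf)).mul_left 2
  apply Summable.of_nonneg_of_le
    (fun m => div_nonneg (hsum_nonneg _) (by positivity)) _ base
  intro m
  have hx : (0:ℝ) < (m:ℝ)+1 := by positivity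
  have hle : hsum (m+1) ≤ 2 * Real.sqrt ((m:ℝ)+1) := by
    have := hsum_le (m+1); push_cast at this; convert this using 3
  have key : Real.sqrt ((m:ℝ)+1) / ((m:ℝ)+1)^2 = 1/((m:ℝ)+1)^((3:ℝ)/2) := by
    rw [Real.sqrt_eq_rpow, ← Real.rpow_natCast ((m:ℝ)+1) 2, ← Real.rpow_sub hx,
      eq_div_iff (by positivity), ← Real.rpow_add hx]
    norm_num
  calc hsum (m+1)/((m:ℝ)+1)^2 ≤ (2 * Real.sqrt ((m:ℝ)+1))/((m:ℝ)+1)^2 := by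
        apply div_le_div_of_nonneg_right hle (by positivity) |>.trans_eq rfl
    _ = 2 * (Real.sqrt ((m:ℝ)+1) / ((m:ℝ)+1)^2) := by ring
    _ = 2 * (1/((m:ℝ)+1)^((3:ℝ)/2)) := by rw [key]

/-- The Euler-sum kernel `1/(m+1)(n+1)(m+n+2)`. -/
def FA (p : ℕ × ℕ) : ℝ := 1/(((p.1:ℝ)+1)*((p.2:ℝ)+1)*((p.1:ℝ)+(p.2:ℝ)+2))

def FC (p : ℕ × ℕ) : ℝ := 1/(((p.1:ℝ)+1)*(((p.1:ℝ)+(p.2:ℝ)+2)^2))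

lemma FA_nonneg (p : ℕ × ℕ) : 0 ≤ FA p := by unfold FA; positivity
lemma FC_nonneg (p : ℕ × ℕ) : 0 ≤ FC p := by unfold FC; positivity

lemma hasSum_FA_slice (m : ℕ) :
    HasSum (fun n : ℕ => FA (m, n)) (hsum (m+1) / ((m:ℝ)+1)^2) := by
  have h := (tele m).mul_left (1/((m:ℝ)+1))
  have e1 : (fun n : ℕ => (1/((m:ℝ)+1)) * (1/(((n:ℝ)+1)*((n:ℝ)+(m:ℝ)+2))))
      = fun n : ℕ => FA (m, n) := by
    funext n; unfold FA; simp only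
    rw [div_mul_div_comm]; ring_nf
  have e2 : (1/((m:ℝ)+1)) * (hsum (m+1) / ((m:ℝ)+1)) = hsum (m+1) / ((m:ℝ)+1)^2 := by
    rw [div_mul_div_comm, one_mul, ← pow_two]
  rwa [e1, e2] at h

lemma summable_FA : Summable FA := by
  rw [summable_prod_of_nonneg FA_nonneg]
  refine ⟨fun m => (hasSum_FA_slice m).summable, ?_⟩
  have : (fun m : ℕ => ∑' n, FA (m, n)) = fun m => hsum (m+1) / ((m:ℝ)+1)^2 :=
    funext fun m => (hasSum_FA_slice m).tsum_eq
  rw [this]; exact sum_outer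

lemma tsum_FA : ∑' p : ℕ × ℕ, FA p = ∑' m : ℕ, hsum (m+1) / ((m:ℝ)+1)^2 := by
  rw [Summable.tsum_prod summable_FA]
  exact tsum_congr fun m => (hasSum_FA_slice m).tsum_eq

lemma FC_le_FA (p : ℕ × ℕ) : FC p ≤ FA p := by
  obtain ⟨m, n⟩ := p
  unfold FA FC
  simp only
  apply one_div_le_one_div_of_le (by positivity)
  have hm : (0:ℝ) ≤ (m:ℝ) := Nat.cast_nonneg m
  have hn : (0:ℝ) ≤ (n:ℝ) := Nat.cast_nonneg n
  nlinarith [mul_nonneg (mul_nonneg (show (0:ℝ) ≤ (m:ℝ)+1 by positivity)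
    (show (0:ℝ) ≤ (m:ℝ)+(n:ℝ)+2 by positivity)) (show (0:ℝ) ≤ (m:ℝ)+1 by positivity)]

lemma summable_FC : Summable FC :=
  Summable.of_nonneg_of_le FC_nonneg FC_le_FA summable_FA

lemma summable_FC_swap : Summable (fun p : ℕ × ℕ => FC p.swap) :=
  ((Equiv.prodComm ℕ ℕ).summable_iff).mpr summable_FC

lemma FA_eq (p : ℕ × ℕ) : FA p = FC p + FC p.swap := by
  obtain ⟨m, n⟩ := p
  unfold FA FC
  simp only [Prod.swap_prod_mk]
  have h1 : ((m:ℝ)+1) ≠ 0 := by positivity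
  have h2 : ((n:ℝ)+1) ≠ 0 := by positivity
  have h3 : ((m:ℝ)+(n:ℝ)+2) ≠ 0 := by positivity
  have h4 : ((n:ℝ)+(m:ℝ)+2) ≠ 0 := by positivity
  field_simp
  ring

lemma A_eq_two_C : ∑' p : ℕ × ℕ, FA p = 2 * ∑' p : ℕ × ℕ, FC p := by
  calc ∑' p : ℕ × ℕ, FA p = ∑' p : ℕ × ℕ, (FC p + FC p.swap) := tsum_congr FA_eq
    _ = (∑' p : ℕ × ℕ, FC p) + ∑' p : ℕ × ℕ, FC p.swap :=
        Summable.tsum_add summable_FC summable_FC_swap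
    _ = 2 * ∑' p : ℕ × ℕ, FC p := by
        rw [show (∑' p : ℕ × ℕ, FC p.swap) = ∑' p : ℕ × ℕ, FC p from
          (Equiv.prodComm ℕ ℕ).tsum_eq FC]
        ring

/-- The triangular version of `FC`. -/
def G (p : ℕ × ℕ) : ℝ := if p.1 ≤ p.2 then 1/(((p.1:ℝ)+1)*(((p.2:ℝ)+2)^2)) else 0

def Phi (p : ℕ × ℕ) : ℕ × ℕ := (p.1, p.1 + p.2)

lemma Phi_inj : Function.Injective Phi := by
  rintro ⟨a, b⟩ ⟨c, d⟩ h
  simp only [Phi, Prod.mk.injEq] at h ⊢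
  omega

lemma G_comp (p : ℕ × ℕ) : G (Phi p) = FC p := by
  obtain ⟨m, n⟩ := p
  simp only [G, Phi, FC, if_pos (Nat.le_add_right m n), Nat.le_add_right, ↓reduceIte]
  push_cast
  ring_nf

lemma G_supp : Function.support G ⊆ Set.range Phi := by
  intro p hp
  rcases le_or_gt p.1 p.2 with h | h
  · exact ⟨(p.1, p.2 - p.1), by simp only [Phi]; rw [Nat.add_sub_cancel' h]⟩
  · exact absurd (by simp [G, if_neg (not_le.mpr h)]) hp

lemma tsum_FC_G : ∑' p : ℕ × ℕ, FC p = ∑' p : ℕ × ℕ, G p :=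
  (tsum_congr fun p => (G_comp p).symm).trans (Phi_inj.tsum_eq G_supp)

lemma summable_G : Summable G := by
  rw [← Phi_inj.summable_iff (by intro x hx; by_contra hne; exact hx (G_supp hne))]
  exact summable_FC.congr (fun p => (G_comp p).symm)

lemma G_inner (s : ℕ) : (∑' m : ℕ, G (m, s)) = hsum (s+1) / ((s:ℝ)+2)^2 := by
  rw [tsum_eq_sum (s := Finset.range (s+1))
    (by intro m hm; simp only [Finset.mem_range] at hm
        exact if_neg (by omega))]
  have e : ∀ m ∈ Finset.range (s+1), G (m, s) = (1/((m:ℝ)+1)) * (1/((s:ℝ)+2)^2) := by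
    intro m hm
    simp only [Finset.mem_range] at hm
    rw [G, if_pos (by omega : m ≤ s)]
    rw [div_mul_div_comm]; ring_nf
  rw [Finset.sum_congr rfl e, ← Finset.sum_mul, ← hsum]
  ring

lemma C_eq : ∑' p : ℕ × ℕ, FC p = ∑' s : ℕ, hsum (s+1) / ((s:ℝ)+2)^2 := by
  have hu : Summable (Function.uncurry fun m s : ℕ => G (m, s)) := summable_G
  rw [tsum_FC_G, Summable.tsum_prod summable_G, ← Summable.tsum_comm hu]
  exact tsum_congr G_inner

lemma summable_hm : Summable (fun m : ℕ => hsum m / ((m:ℝ)+1)^2) := by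
  apply Summable.of_nonneg_of_le (fun m => div_nonneg (hsum_nonneg _) (by positivity)) _ sum_outer
  intro m
  apply div_le_div_of_nonneg_right _ (by positivity)
  rw [hsum_succ]
  have : (0:ℝ) ≤ 1/((m:ℝ)+1) := by positivity
  linarith

lemma C_val : ∑' p : ℕ × ℕ, FC p = zeta3 := by
  have e1 : ∑' m : ℕ, hsum (m+1) / ((m:ℝ)+1)^2
      = (∑' m : ℕ, hsum m / ((m:ℝ)+1)^2) + zeta3 := by
    have pt : ∀ m : ℕ, hsum (m+1) / ((m:ℝ)+1)^2
        = hsum m / ((m:ℝ)+1)^2 + 1/((m:ℝ)+1)^3 := by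
      intro m
      rw [hsum_succ]
      field_simp
    rw [tsum_congr pt, Summable.tsum_add summable_hm cube]
    rfl
  have e2 : ∑' m : ℕ, hsum m / ((m:ℝ)+1)^2 = ∑' p : ℕ × ℕ, FC p := by
    rw [C_eq, Summable.tsum_eq_zero_add summable_hm]
    have h0 : hsum 0 / (((0:ℕ):ℝ)+1)^2 = 0 := by
      simp [hsum]
    rw [h0, zero_add]
    refine (tsum_congr fun k => ?_).symm
    congr 1
    push_cast
    ring
  have := A_eq_two_C
  rw [tsum_FA, e1, e2] at this
  linarith

lemma summable_inner : Summable (fun m : ℕ => ∑' n : ℕ, FC (m, n)) :=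
  ((summable_prod_of_nonneg FC_nonneg).mp summable_FC).2

lemma inner_zero : (∑' n : ℕ, FC (0, n)) = zeta2 - 1 := by
  have hz : zeta2 = 1 + ∑' n : ℕ, 1/((n:ℝ)+2)^2 := by
    rw [zeta2, Summable.tsum_eq_zero_add sq2]
    norm_num
    exact tsum_congr fun n => by ring_nf
  have : (∑' n : ℕ, FC (0, n)) = ∑' n : ℕ, 1/((n:ℝ)+2)^2 :=
    tsum_congr fun n => by simp [FC]
  rw [this, hz]; ring

lemma cube_shift : (∑' k : ℕ, 1/((k:ℝ)+2)^3) = zeta3 - 1 := by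
  have hz : zeta3 = 1 + ∑' k : ℕ, 1/((k:ℝ)+2)^3 := by
    rw [zeta3, Summable.tsum_eq_zero_add cube]
    norm_num
    exact tsum_congr fun n => by ring_nf
  rw [hz]; ring

lemma summable_slice (k : ℕ) :
    Summable (fun n : ℕ => 1/(((k:ℝ)+2)*(((n:ℝ)+(k:ℝ)+2)^2))) := by
  apply Summable.of_nonneg_of_le (fun n => by positivity) _ sq2
  intro n
  apply one_div_le_one_div_of_le (by positivity)
  have hk : (0:ℝ) ≤ (k:ℝ) := Nat.cast_nonneg k
  have hn : (0:ℝ) ≤ (n:ℝ) := Nat.cast_nonneg n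
  nlinarith

lemma trigamma_term (k : ℕ) : trigamma ((k:ℝ)+2) / ((k:ℝ)+2)
    = 1/((k:ℝ)+2)^3 + ∑' n : ℕ, FC (k+1, n) := by
  rw [trigamma, ← tsum_div_const]
  have e : (fun n : ℕ => (1:ℝ)/((n:ℝ)+((k:ℝ)+2))^2 / ((k:ℝ)+2))
      = fun n : ℕ => 1/(((k:ℝ)+2)*(((n:ℝ)+(k:ℝ)+2)^2)) := by
    funext n
    rw [div_div, one_div, one_div]
    ring_nf
  rw [e, Summable.tsum_eq_zero_add (summable_slice k)]
  congr 1
  · push_cast; field_simp; ring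
  · refine (tsum_congr fun n => ?_).symm
    simp only [FC]
    push_cast
    ring_nf

theorem main : (∑' k : ℕ, trigamma ((k : ℝ) + 2) / ((k : ℝ) + 2)) = 2 * zeta3 - zeta2 := by
  rw [tsum_congr trigamma_term]
  have s1 : Summable (fun k : ℕ => 1/((k:ℝ)+2)^3) := by
    have := (summable_nat_add_iff 1).mpr cube
    exact this.congr fun n => by push_cast; ring_nf
  have s2 : Summable (fun k : ℕ => ∑' n : ℕ, FC (k+1, n)) :=
    (summable_nat_add_iff 1).mpr summable_inner
  rw [Summable.tsum_add s1 s2, cube_shift]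
  have e : (∑' k : ℕ, ∑' n : ℕ, FC (k+1, n)) = zeta3 - (zeta2 - 1) := by
    have := Summable.tsum_eq_zero_add summable_inner
    rw [← Summable.tsum_prod summable_FC, C_val, inner_zero] at this
    linarith
  rw [e]
  ring

end Stmt5Aux

theorem stmt5 :
    (∑' k : ℕ, trigamma ((k : ℝ) + 2) / ((k : ℝ) + 2)) = 2 * zeta3 - zeta2 :=
  Stmt5Aux.main
end
end

section
/- For every positive integer k, ψ((2k+5)/4) - ψ((2k+3)/4) = (-1)^{k-1}·π + 4·(-1)^k·Σ_{j=0}^k (-1)^j/(2j+1). -/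
open scoped Real
open Filter Finset Topology

noncomputable section

lemma min_mul_le (a : ℝ) (ha : 0 < a) (n : ℕ) : min a 1 * ((n:ℝ)+1) ≤ (n:ℝ) + a := by
  rcases le_total a 1 with h | h
  · rw [min_eq_left h]
    have : (0:ℝ) ≤ n := n.cast_nonneg
    nlinarith
  · rw [min_eq_right h]
    have : (0:ℝ) ≤ n := n.cast_nonneg
    nlinarith

lemma summable_inv_mul (a b : ℝ) (ha : 0 < a) (hb : 0 < b) :
    Summable (fun n : ℕ => 1/(((n:ℝ)+a)*((n:ℝ)+b))) := by
  have hsq : Summable (fun n : ℕ => 1/((n:ℝ)+1)^2) := by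
    have := (summable_nat_add_iff 1).mpr (Real.summable_one_div_nat_pow.mpr (le_refl 2))
    exact this.congr fun n => by push_cast; ring
  have hma : 0 < min a 1 := lt_min ha one_pos
  have hmb : 0 < min b 1 := lt_min hb one_pos
  refine Summable.of_nonneg_of_le (fun n => ?_) (fun n => ?_)
    (hsq.mul_left (1/(min a 1 * min b 1)))
  · positivity
  · have hna : (0:ℝ) < (n:ℝ) + a := by positivity
    have hnb : (0:ℝ) < (n:ℝ) + b := by positivity
    have h1 : min a 1 * ((n:ℝ)+1) ≤ (n:ℝ) + a := min_mul_le a ha n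
    have h2 : min b 1 * ((n:ℝ)+1) ≤ (n:ℝ) + b := min_mul_le b hb n
    have key : (min a 1 * min b 1) * ((n:ℝ)+1)^2 ≤ ((n:ℝ)+a)*((n:ℝ)+b) := by
      have hn1 : (0:ℝ) < (n:ℝ)+1 := by positivity
      calc (min a 1 * min b 1) * ((n:ℝ)+1)^2
          = (min a 1 * ((n:ℝ)+1)) * (min b 1 * ((n:ℝ)+1)) := by ring
        _ ≤ ((n:ℝ)+a)*((n:ℝ)+b) := by
            apply mul_le_mul h1 h2 (by positivity) (le_of_lt hna)
    have := inv_anti₀ (show (0:ℝ) < (min a 1 * min b 1) * ((n:ℝ)+1)^2 by positivity) key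
    simp only [one_div, mul_inv] at this ⊢
    exact this

lemma summable_diff (a b : ℝ) (ha : 0 < a) (hb : 0 < b) :
    Summable (fun n : ℕ => 1/((n:ℝ)+a) - 1/((n:ℝ)+b)) := by
  refine ((summable_inv_mul a b ha hb).mul_left (b-a)).congr fun n => ?_
  have h1 : ((n:ℝ)+a) ≠ 0 := by positivity
  have h2 : ((n:ℝ)+b) ≠ 0 := by positivity
  field_simp
  try ring

/-- The digamma function (for positive real arguments), via its series representation. -/
def digamma (x : ℝ) : ℝ :=
  -Real.eulerMascheroniConstant + ∑' k : ℕ, ((1 : ℝ) / (k + 1) - 1 / (k + x))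

lemma digamma_sub (a b : ℝ) (ha : 0 < a) (hb : 0 < b) :
    digamma b - digamma a = ∑' n : ℕ, (1/((n:ℝ)+a) - 1/((n:ℝ)+b)) := by
  have h1 : Summable (fun n : ℕ => 1/((n:ℝ)+1) - 1/((n:ℝ)+a)) := summable_diff 1 a one_pos ha
  have h2 : Summable (fun n : ℕ => 1/((n:ℝ)+1) - 1/((n:ℝ)+b)) := summable_diff 1 b one_pos hb
  have e : digamma b - digamma a =
      (∑' n : ℕ, ((1:ℝ)/((n:ℝ)+1) - 1/((n:ℝ)+b))) - ∑' n : ℕ, ((1:ℝ)/((n:ℝ)+1) - 1/((n:ℝ)+a)) := by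
    unfold digamma; ring
  rw [e, ← Summable.tsum_sub h2 h1]
  exact tsum_congr fun n => by ring

lemma pair_sum (c : ℕ) (N : ℕ) :
    ∑ n ∈ range N, (1/(4*(n:ℝ)+2*c+1) - 1/(4*(n:ℝ)+2*c+3))
      = (-1:ℝ)^c * ((∑ j ∈ range (c + 2*N), (-1:ℝ)^j/(2*j+1)) -
          ∑ j ∈ range c, (-1:ℝ)^j/(2*j+1)) := by
  induction N with
  | zero => simp
  | succ N ih =>
    rw [Finset.sum_range_succ, ih, show c + 2*(N+1) = (c+2*N) + 1 + 1 by ring,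
      Finset.sum_range_succ, Finset.sum_range_succ]
    have key : (-1:ℝ)^(c+2*N) = (-1)^c := by
      rw [pow_add, pow_mul, neg_one_sq, one_pow, mul_one]
    rw [pow_succ, key]
    push_cast
    have hc1 : (2:ℝ)*(↑c+2*↑N)+1 = 4*↑N+2*↑c+1 := by ring
    have hc2 : (2:ℝ)*(↑c+2*↑N+1)+1 = 4*↑N+2*↑c+3 := by ring
    rw [hc1, hc2]
    have hsq : ((-1:ℝ)^c) * ((-1:ℝ)^c) = 1 := by
      rw [← pow_add, ← two_mul, pow_mul, neg_one_sq, one_pow]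
    linear_combination (1/(4*(N:ℝ)+2*(c:ℝ)+3) - 1/(4*(N:ℝ)+2*(c:ℝ)+1)) * hsq

lemma tsum_tail (c : ℕ) :
    ∑' n : ℕ, (1/(4*(n:ℝ)+2*c+1) - 1/(4*(n:ℝ)+2*c+3))
      = (-1:ℝ)^c * (π/4 - ∑ j ∈ range c, (-1:ℝ)^j/(2*j+1)) := by
  set f : ℕ → ℝ := fun n => 1/(4*(n:ℝ)+2*c+1) - 1/(4*(n:ℝ)+2*c+3) with hf
  have hsum : Summable f := by
    refine ((summable_diff ((2*c+1)/4) ((2*c+3)/4) (by positivity) (by positivity)).mul_left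
      ((1:ℝ)/4)).congr fun n => ?_
    rw [hf]
    have h1 : ((n:ℝ)+(2*c+1)/4) ≠ 0 := by positivity
    have h2 : ((n:ℝ)+(2*c+3)/4) ≠ 0 := by positivity
    have h3 : (4*(n:ℝ)+2*c+1) ≠ 0 := by positivity
    have h4 : (4*(n:ℝ)+2*c+3) ≠ 0 := by positivity
    field_simp
    ring
  have h1 : Tendsto (fun N => ∑ n ∈ range N, f n) atTop (𝓝 (∑' n, f n)) :=
    hsum.hasSum.tendsto_sum_nat
  have hmono : Tendsto (fun N : ℕ => c + 2*N) atTop atTop :=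
    tendsto_atTop_mono (fun n => by simp only [id_eq]; omega) tendsto_id
  have hL : Tendsto (fun N : ℕ => ∑ j ∈ range (c + 2*N), (-1:ℝ)^j/(2*j+1)) atTop (𝓝 (π/4)) :=
    Real.tendsto_sum_pi_div_four.comp hmono
  have h2 : Tendsto (fun N => ∑ n ∈ range N, f n) atTop
      (𝓝 ((-1:ℝ)^c * (π/4 - ∑ j ∈ range c, (-1:ℝ)^j/(2*j+1)))) := by
    have : (fun N => ∑ n ∈ range N, f n) = fun N =>
        (-1:ℝ)^c * ((∑ j ∈ range (c + 2*N), (-1:ℝ)^j/(2*j+1)) -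
          ∑ j ∈ range c, (-1:ℝ)^j/(2*j+1)) := funext fun N => pair_sum c N
    rw [this]
    exact (hL.sub_const _).const_mul _
  exact tendsto_nhds_unique h1 h2

theorem stmt10 (k : ℕ) (hk : 1 ≤ k) :
    digamma ((2 * k + 5) / 4) - digamma ((2 * k + 3) / 4) =
      (-1 : ℝ)^(k - 1) * π +
        4 * (-1 : ℝ)^k * ∑ j ∈ Finset.range (k + 1), (-1 : ℝ)^j / (2 * j + 1) := by
  obtain ⟨m, rfl⟩ : ∃ m, k = m + 1 := ⟨k - 1, by omega⟩
  have ha : (0:ℝ) < (2 * (m+1:ℕ) + 3) / 4 := by positivity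
  have hb : (0:ℝ) < (2 * (m+1:ℕ) + 5) / 4 := by positivity
  rw [digamma_sub _ _ ha hb]
  have key : ∀ n : ℕ, (1:ℝ)/((n:ℝ)+(2 * (m+1:ℕ) + 3) / 4) - 1/((n:ℝ)+(2 * (m+1:ℕ) + 5) / 4)
      = 4 * (1/(4*(n:ℝ)+2*(m+2:ℕ)+1) - 1/(4*(n:ℝ)+2*(m+2:ℕ)+3)) := by
    intro n
    have h1 : ((n:ℝ)+(2 * (m+1:ℕ) + 3) / 4) ≠ 0 := by positivity
    have h2 : ((n:ℝ)+(2 * (m+1:ℕ) + 5) / 4) ≠ 0 := by positivity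
    have h3 : (4*(n:ℝ)+2*(m+2:ℕ)+1) ≠ 0 := by positivity
    have h4 : (4*(n:ℝ)+2*(m+2:ℕ)+3) ≠ 0 := by positivity
    push_cast
    field_simp
    ring
  rw [tsum_congr key, tsum_mul_left, tsum_tail (m+2)]
  have hrange : (m+1+1) = m+2 := rfl
  rw [hrange]
  have hp : (-1:ℝ)^(m+2) = (-1)^m := by
    rw [pow_add, neg_one_sq, mul_one]
  have hp2 : (-1:ℝ)^(m+1) = -(-1)^m := by
    rw [pow_succ, mul_neg_one]
  have hp3 : (m+1) - 1 = m := rfl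
  rw [hp, hp2, hp3]
  ring
end
end

section
/- ∫₀¹ (ln(1-x)·ln(1+x))/x dx = -(5/8)·ζ(3). -/
open scoped Real

noncomputable section

open Real MeasureTheory Set





lemma summable_cube : Summable (fun n : ℕ => (1:ℝ)/((n:ℝ)+1)^3) := by
  have h : Summable (fun n : ℕ => (1:ℝ)/(n:ℝ)^3) := summable_one_div_nat_pow.mpr (by norm_num)
  have := (summable_nat_add_iff 1).mpr h
  refine this.congr fun n => ?_
  push_cast
  ring_nf

lemma summable_odd_cube : Summable (fun k : ℕ => (1:ℝ)/((2*(k:ℝ)+1))^3) := by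
  have h := summable_cube.comp_injective (i := fun k : ℕ => 2*k) (fun a b h => by simp at h; omega)
  refine h.congr fun k => ?_
  simp only [Function.comp]
  push_cast
  ring_nf

lemma odd_cube_sum : ∑' k : ℕ, (1:ℝ)/((2*(k:ℝ)+1))^3 = 7/8 * zeta3 := by
  have he : Summable (fun k : ℕ => (1:ℝ)/(((2*k : ℕ):ℝ)+1)^3) := by
    refine summable_odd_cube.congr fun k => ?_
    push_cast; ring_nf
  have ho : Summable (fun k : ℕ => (1:ℝ)/(((2*k+1 : ℕ):ℝ)+1)^3) := by
    have := summable_cube.comp_injective (i := fun k : ℕ => 2*k+1) (fun a b h => by simp at h; omega)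
    refine this.congr fun k => ?_
    simp only [Function.comp]
  have key := tsum_even_add_odd (f := fun n : ℕ => (1:ℝ)/((n:ℝ)+1)^3) he ho
  have h1 : ∑' k : ℕ, (1:ℝ)/(((2*k : ℕ):ℝ)+1)^3 = ∑' k : ℕ, (1:ℝ)/((2*(k:ℝ)+1))^3 := by
    refine tsum_congr fun k => ?_; push_cast; ring_nf
  have h2 : ∑' k : ℕ, (1:ℝ)/(((2*k+1 : ℕ):ℝ)+1)^3 = 1/8 * zeta3 := by
    have : ∀ k : ℕ, (1:ℝ)/(((2*k+1 : ℕ):ℝ)+1)^3 = 1/8 * ((1:ℝ)/((k:ℝ)+1)^3) := by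
      intro k; push_cast; field_simp; ring
    rw [tsum_congr this, tsum_mul_left]
    rfl
  have hz : (∑' n : ℕ, (1:ℝ)/((n:ℝ)+1)^3) = zeta3 := by
    unfold zeta3; rfl
  rw [h1, h2, hz] at key
  linarith

lemma mono_int (n : ℕ) :
    IntegrableOn (fun u : ℝ => u^n * (Real.log u)^2) (Ioo 0 1) ∧
    ∫ u in Ioo (0:ℝ) 1, u^n * (Real.log u)^2 = 2/((n:ℝ)+1)^3 := by
  set f : ℝ → ℝ := fun t => Real.exp (-t) with hf
  have hd : ∀ t ∈ Ioi (0:ℝ), HasDerivWithinAt f (-Real.exp (-t)) (Ioi 0) t := by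
    intro t _
    have h1 : HasDerivAt f (Real.exp (-t) * (-1)) t :=
      (Real.hasDerivAt_exp (-t)).comp t ((hasDerivAt_id t).neg)
    simpa using h1.hasDerivWithinAt
  have hinj : InjOn f (Ioi 0) := by
    intro a _ b _ h
    have := Real.exp_injective h
    linarith [neg_injective this]
  have himg : f '' Ioi 0 = Ioo (0:ℝ) 1 := by
    ext u
    constructor
    · rintro ⟨t, ht, rfl⟩
      exact ⟨Real.exp_pos _, Real.exp_lt_one_iff.mpr (by simpa using ht)⟩
    · rintro ⟨hu0, hu1⟩
      exact ⟨-Real.log u, by simpa using Real.log_neg hu0 hu1, by simp [hf, Real.exp_log hu0]⟩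
  set g : ℝ → ℝ := fun u => u^n * (Real.log u)^2 with hg
  have key : ∀ t ∈ Ioi (0:ℝ),
      |(-Real.exp (-t))| • g (f t) = t ^ ((3:ℝ)-1) * Real.exp (-((((n:ℕ):ℝ)+1) * t)) := by
    intro t ht
    have h2 : ((3:ℝ)-1) = ((2:ℕ):ℝ) := by norm_num
    rw [h2, Real.rpow_natCast]
    simp only [hg, hf, abs_neg, abs_of_pos (Real.exp_pos _), smul_eq_mul, Real.log_exp]
    have h4 : (-((((n:ℕ):ℝ)+1) * t) : ℝ) = -t + (n:ℝ) * -t := by ring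
    have h5 : Real.exp (-t) ^ n = Real.exp (-(t*(n:ℝ))) := by
      rw [← Real.exp_nat_mul]; exact congrArg Real.exp (by ring)
    rw [h4, Real.exp_add, h5]
    ring_nf
  have hval : ∫ t in Ioi (0:ℝ), t ^ ((3:ℝ)-1) * Real.exp (-((((n:ℕ):ℝ)+1) * t))
      = 2/((n:ℝ)+1)^3 := by
    rw [integral_rpow_mul_exp_neg_mul_Ioi (by norm_num : (0:ℝ) < 3)
      (by positivity : (0:ℝ) < (n:ℝ)+1)]
    have e1 : ((1:ℝ)/((n:ℝ)+1)) ^ (3:ℝ) = ((1:ℝ)/((n:ℝ)+1))^(3:ℕ) := by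
      rw [show (3:ℝ) = ((3:ℕ):ℝ) by norm_num, Real.rpow_natCast]
    have e2 : Real.Gamma 3 = 2 := by
      rw [show (3:ℝ) = ((2:ℕ):ℝ)+1 by norm_num, Real.Gamma_nat_eq_factorial]
      norm_num [Nat.factorial]
    rw [e1, e2]
    have hne : ((n:ℝ)+1) ≠ 0 := by positivity
    field_simp
  have hint : IntegrableOn (fun t => t ^ ((3:ℝ)-1) * Real.exp (-((((n:ℕ):ℝ)+1) * t))) (Ioi 0) := by
    have := integrableOn_rpow_mul_exp_neg_mul_rpow (by norm_num : (-1:ℝ) < 3-1)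
      (zero_lt_one : (0:ℝ) < 1) (by positivity : (0:ℝ) < (n:ℝ)+1)
    refine this.congr_fun (fun t ht => ?_) measurableSet_Ioi
    simp only [Real.rpow_one]
    ring_nf
  constructor
  · rw [← himg]
    rw [integrableOn_image_iff_integrableOn_abs_deriv_smul measurableSet_Ioi hd hinj]
    exact hint.congr_fun (fun t ht => (key t ht).symm) measurableSet_Ioi
  · rw [← himg, integral_image_eq_integral_abs_deriv_smul measurableSet_Ioi hd hinj]
    rw [setIntegral_congr_fun measurableSet_Ioi key]
    exact hval




lemma helper_tsum {f : ℕ → ℝ → ℝ} {g : ℝ → ℝ} {s : Set ℝ} (hs : MeasurableSet s)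
    (hg : ContinuousOn g s)
    (hgf : ∀ x ∈ s, g x = ∑' n, f n x)
    (h0 : ∀ n, ∀ x ∈ s, 0 ≤ f n x)
    (hps : ∀ x ∈ s, Summable (fun n => f n x))
    (hf : ∀ n, IntegrableOn (f n) s)
    (hsum : Summable (fun n => ∫ x in s, f n x)) :
    IntegrableOn g s ∧ ∫ x in s, g x = ∑' n, ∫ x in s, f n x := by
  have hnn : ∀ n, 0 ≤ ∫ x in s, f n x := fun n =>
    setIntegral_nonneg hs (h0 n)
  have hofReal : ∀ n, ∫⁻ x in s, ENNReal.ofReal (f n x) = ENNReal.ofReal (∫ x in s, f n x) := by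
    intro n
    rw [← ofReal_integral_eq_lintegral_ofReal (hf n)
      (ae_restrict_of_forall_mem hs (h0 n))]
  have hmeas : ∀ n, AEMeasurable (fun x => ENNReal.ofReal (f n x)) (volume.restrict s) := by
    intro n
    exact ENNReal.measurable_ofReal.comp_aemeasurable (hf n).aestronglyMeasurable.aemeasurable
  have hlint : ∫⁻ x in s, ENNReal.ofReal (g x) = ENNReal.ofReal (∑' n, ∫ x in s, f n x) := by
    have e1 : ∫⁻ x in s, ENNReal.ofReal (g x) = ∫⁻ x in s, ∑' n, ENNReal.ofReal (f n x) := by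
      refine setLIntegral_congr_fun hs (fun x hx => ?_)
      rw [hgf x hx, ENNReal.ofReal_tsum_of_nonneg (fun n => h0 n x hx) (hps x hx)]
    rw [e1, lintegral_tsum hmeas]
    simp_rw [hofReal]
    rw [← ENNReal.ofReal_tsum_of_nonneg hnn hsum]
  have hintg : IntegrableOn g s := by
    constructor
    · exact hg.aestronglyMeasurable hs
    · rw [hasFiniteIntegral_iff_norm]
      have : ∫⁻ x in s, ENNReal.ofReal ‖g x‖ = ∫⁻ x in s, ENNReal.ofReal (g x) := by
        refine setLIntegral_congr_fun hs (fun x hx => ?_)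
        rw [Real.norm_of_nonneg (by rw [hgf x hx]; exact tsum_nonneg (fun n => h0 n x hx))]
      rw [this, hlint]
      exact ENNReal.ofReal_lt_top
  refine ⟨hintg, ?_⟩
  have h' : Summable fun n => ∫ x in s, ‖f n x‖ := by
    refine hsum.congr (fun n => ?_)
    refine (setIntegral_congr_fun hs (fun x hx => ?_)).symm
    rw [Real.norm_of_nonneg (h0 n x hx)]
  have h2 := integral_tsum_of_summable_integral_norm hf h'
  rw [setIntegral_congr_fun hs (fun x hx => hgf x hx), ← h2]
lemma J_lemma :
    IntegrableOn (fun x : ℝ => (Real.log (1 - x^2))^2 / x) (Ioo 0 1) ∧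
    ∫ x in Ioo (0:ℝ) 1, (Real.log (1 - x^2))^2 / x = zeta3 := by
  set φ : ℝ → ℝ := fun x => 1 - x^2 with hφ
  have hd : ∀ x ∈ Ioo (0:ℝ) 1, HasDerivWithinAt φ (-(2*x)) (Ioo 0 1) x := by
    intro x _
    have h1 : HasDerivAt φ (-((2:ℕ)*x^(2-1))) x := ((hasDerivAt_pow 2 x).const_sub 1)
    simpa using h1.hasDerivWithinAt
  have hinj : InjOn φ (Ioo 0 1) := by
    intro a ha b hb h
    have h1 : (a-b)*(a+b) = 0 := by simp only [hφ] at h; nlinarith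
    rcases mul_eq_zero.mp h1 with h2 | h2
    · linarith
    · exfalso; have := ha.1; have := hb.1; linarith
  have himg : φ '' Ioo 0 1 = Ioo (0:ℝ) 1 := by
    ext u
    constructor
    · rintro ⟨x, ⟨hx0, hx1⟩, rfl⟩
      exact ⟨by simp only [hφ]; nlinarith, by simp only [hφ]; nlinarith⟩
    · rintro ⟨hu0, hu1⟩
      refine ⟨Real.sqrt (1-u), ⟨Real.sqrt_pos.mpr (by linarith), ?_⟩, ?_⟩
      · have := Real.sqrt_lt_sqrt (by linarith : (0:ℝ) ≤ 1-u) (by linarith : 1-u < 1)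
        simpa using this
      · simp only [hφ, Real.sq_sqrt (by linarith : (0:ℝ) ≤ 1-u)]; ring
  set g : ℝ → ℝ := fun u => (Real.log u)^2 / (2*(1-u)) with hg
  have hcont : ContinuousOn g (Ioo 0 1) := by
    apply ContinuousOn.div
    · exact ((Real.continuousOn_log.mono (by intro x hx; simp; exact ne_of_gt hx.1)).pow 2)
    · fun_prop
    · intro x hx; have := hx.2; intro hcon; nlinarith [hcon]
  have hgf : ∀ u ∈ Ioo (0:ℝ) 1, g u = ∑' n : ℕ, u^n * (Real.log u)^2 / 2 := by
    intro u hu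
    have h1 : ∀ n : ℕ, u^n * (Real.log u)^2 / 2 = u^n * ((Real.log u)^2/2) := fun n => by ring
    rw [tsum_congr h1, tsum_mul_right, tsum_geometric_of_lt_one hu.1.le hu.2]
    have h2 : (1:ℝ) - u ≠ 0 := by have := hu.2; intro h; linarith
    simp only [hg]
    field_simp
  have h0 : ∀ n : ℕ, ∀ u ∈ Ioo (0:ℝ) 1, 0 ≤ u^n * (Real.log u)^2 / 2 := by
    intro n u hu
    have := hu.1
    positivity
  have hps : ∀ u ∈ Ioo (0:ℝ) 1, Summable (fun n : ℕ => u^n * (Real.log u)^2 / 2) := by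
    intro u hu
    have h1 : ∀ n : ℕ, u^n * (Real.log u)^2 / 2 = ((Real.log u)^2/2) * u^n := fun n => by ring
    exact Summable.congr ((summable_geometric_of_lt_one hu.1.le hu.2).mul_left _)
      (fun n => (h1 n).symm)
  have hfint : ∀ n : ℕ, IntegrableOn (fun u : ℝ => u^n * (Real.log u)^2 / 2) (Ioo 0 1) :=
    fun n => (mono_int n).1.div_const 2
  have hsum : Summable (fun n : ℕ => ∫ u in Ioo (0:ℝ) 1, u^n * (Real.log u)^2 / 2) := by
    refine summable_cube.congr fun n => ?_
    rw [integral_div, (mono_int n).2]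
    ring
  have hser := helper_tsum measurableSet_Ioo hcont hgf h0 hps hfint hsum
  obtain ⟨hintg, hval⟩ := hser
  have hval2 : ∫ u in Ioo (0:ℝ) 1, g u = zeta3 := by
    rw [hval]
    unfold zeta3
    exact tsum_congr fun n => by rw [integral_div, (mono_int n).2]; ring
  have hcov : ∀ x ∈ Ioo (0:ℝ) 1, |(-(2*x))| • g (φ x) = (Real.log (1 - x^2))^2 / x := by
    intro x hx
    have hx0 := hx.1
    have h1 : |(-(2*x))| = 2*x := by rw [abs_neg, abs_of_pos (by linarith)]
    simp only [hg, hφ, h1, smul_eq_mul]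
    have h2 : (1:ℝ) - (1 - x^2) = x^2 := by ring
    rw [h2]
    field_simp
  constructor
  · have := (integrableOn_image_iff_integrableOn_abs_deriv_smul measurableSet_Ioo hd hinj g)
    rw [himg] at this
    have h2 := this.mp hintg
    exact h2.congr_fun hcov measurableSet_Ioo
  · have := integral_image_eq_integral_abs_deriv_smul measurableSet_Ioo hd hinj g
    rw [himg] at this
    rw [← setIntegral_congr_fun measurableSet_Ioo hcov, ← this, hval2]

lemma K_lemma :
    IntegrableOn (fun x : ℝ => (Real.log ((1-x)/(1+x)))^2 / x) (Ioo 0 1) ∧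
    ∫ x in Ioo (0:ℝ) 1, (Real.log ((1-x)/(1+x)))^2 / x = 7/2 * zeta3 := by
  set ψ : ℝ → ℝ := fun x => (1-x)/(1+x) with hψ
  have hd : ∀ x ∈ Ioo (0:ℝ) 1, HasDerivWithinAt ψ (-(2/(1+x)^2)) (Ioo 0 1) x := by
    intro x hx
    have hne : (1:ℝ) + x ≠ 0 := by have := hx.1; intro h; linarith
    have hnum : HasDerivAt (fun y : ℝ => 1 - y) (-1) x := by
      simpa using (hasDerivAt_id x).const_sub 1
    have hden : HasDerivAt (fun y : ℝ => 1 + y) 1 x := by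
      simpa using (hasDerivAt_id x).const_add 1
    have h1 := hnum.div hden hne
    have h2 : ((-1) * (1+x) - (1-x) * 1)/(1+x)^2 = -(2/(1+x)^2) := by ring
    rw [h2] at h1
    exact h1.hasDerivWithinAt
  have hinj : InjOn ψ (Ioo 0 1) := by
    intro a ha b hb h
    have hna : (1:ℝ) + a ≠ 0 := by have := ha.1; intro hc; linarith
    have hnb : (1:ℝ) + b ≠ 0 := by have := hb.1; intro hc; linarith
    simp only [hψ] at h
    rw [div_eq_div_iff hna hnb] at h
    nlinarith [h]
  have himg : ψ '' Ioo 0 1 = Ioo (0:ℝ) 1 := by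
    ext t
    constructor
    · rintro ⟨x, ⟨hx0, hx1⟩, rfl⟩
      have hpx : (0:ℝ) < 1 + x := by linarith
      constructor
      · exact div_pos (by linarith) hpx
      · rw [div_lt_one hpx]; linarith
    · rintro ⟨ht0, ht1⟩
      have hpt : (0:ℝ) < 1 + t := by linarith
      refine ⟨(1-t)/(1+t), ⟨div_pos (by linarith) hpt, by rw [div_lt_one hpt]; linarith⟩, ?_⟩
      simp only [hψ]
      have e1 : 1 - (1-t)/(1+t) = 2*t/(1+t) := by field_simp; ring
      have e2 : 1 + (1-t)/(1+t) = 2/(1+t) := by field_simp; ring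
      rw [e1, e2]
      rw [div_div_div_eq]
      field_simp
  set g : ℝ → ℝ := fun t => 2*(Real.log t)^2 / (1-t^2) with hg
  have hcont : ContinuousOn g (Ioo 0 1) := by
    apply ContinuousOn.div
    · exact ContinuousOn.mul continuousOn_const
        ((Real.continuousOn_log.mono (by intro x hx; simp; exact ne_of_gt hx.1)).pow 2)
    · fun_prop
    · intro x hx
      have h1 := hx.1; have h2 := hx.2
      intro hcon; nlinarith [hcon]
  have hgf : ∀ t ∈ Ioo (0:ℝ) 1, g t = ∑' k : ℕ, t^(2*k) * (Real.log t)^2 * 2 := by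
    intro t ht
    have hsq : t^2 < 1 := by nlinarith [ht.1, ht.2]
    have h1 : ∀ k : ℕ, t^(2*k) * (Real.log t)^2 * 2 = (t^2)^k * ((Real.log t)^2*2) := by
      intro k; rw [pow_mul]; ring
    rw [tsum_congr h1, tsum_mul_right, tsum_geometric_of_lt_one (by positivity) hsq]
    simp only [hg]
    ring
  have h0 : ∀ k : ℕ, ∀ t ∈ Ioo (0:ℝ) 1, 0 ≤ t^(2*k) * (Real.log t)^2 * 2 := by
    intro k t ht
    have := ht.1
    positivity
  have hps : ∀ t ∈ Ioo (0:ℝ) 1, Summable (fun k : ℕ => t^(2*k) * (Real.log t)^2 * 2) := by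
    intro t ht
    have hsq : t^2 < 1 := by nlinarith [ht.1, ht.2]
    have h1 : ∀ k : ℕ, t^(2*k) * (Real.log t)^2 * 2 = ((Real.log t)^2*2) * (t^2)^k := by
      intro k; rw [pow_mul]; ring
    exact Summable.congr ((summable_geometric_of_lt_one (by positivity) hsq).mul_left _)
      (fun k => (h1 k).symm)
  have hfint : ∀ k : ℕ, IntegrableOn (fun t : ℝ => t^(2*k) * (Real.log t)^2 * 2) (Ioo 0 1) :=
    fun k => (mono_int (2*k)).1.mul_const 2
  have hintval : ∀ k : ℕ, ∫ t in Ioo (0:ℝ) 1, t^(2*k) * (Real.log t)^2 * 2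
      = 4 * ((1:ℝ)/((2*(k:ℝ)+1))^3) := by
    intro k
    rw [integral_mul_const, (mono_int (2*k)).2]
    push_cast
    ring
  have hsum : Summable (fun k : ℕ => ∫ t in Ioo (0:ℝ) 1, t^(2*k) * (Real.log t)^2 * 2) := by
    refine (summable_odd_cube.mul_left 4).congr fun k => ?_
    rw [hintval k]
  have hser := helper_tsum measurableSet_Ioo hcont hgf h0 hps hfint hsum
  obtain ⟨hintg, hval⟩ := hser
  have hval2 : ∫ t in Ioo (0:ℝ) 1, g t = 7/2 * zeta3 := by
    rw [hval, tsum_congr hintval, tsum_mul_left, odd_cube_sum]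
    ring
  have hcov : ∀ x ∈ Ioo (0:ℝ) 1, |(-(2/(1+x)^2))| • g (ψ x)
      = (Real.log ((1-x)/(1+x)))^2 / x := by
    intro x hx
    have hx0 := hx.1
    have hne : (1:ℝ) + x ≠ 0 := by intro h; linarith
    have h1 : |(-(2/(1+x)^2))| = 2/(1+x)^2 := by
      rw [abs_neg, abs_of_pos (by positivity)]
    have hden : 1 - ((1-x)/(1+x))^2 = 4*x/(1+x)^2 := by
      field_simp
      ring
    have hxne : x ≠ 0 := ne_of_gt hx0
    simp only [hg, hψ, h1, smul_eq_mul, hden]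
    rw [div_div_eq_mul_div]
    field_simp
    ring
  constructor
  · have := (integrableOn_image_iff_integrableOn_abs_deriv_smul measurableSet_Ioo hd hinj g)
    rw [himg] at this
    have h2 := this.mp hintg
    exact h2.congr_fun hcov measurableSet_Ioo
  · have := integral_image_eq_integral_abs_deriv_smul measurableSet_Ioo hd hinj g
    rw [himg] at this
    rw [← setIntegral_congr_fun measurableSet_Ioo hcov, ← this, hval2]

theorem stmt12 :
    (∫ x in (0:ℝ)..1, Real.log (1 - x) * Real.log (1 + x) / x) = -(5/8) * zeta3 := by
  rw [intervalIntegral.integral_of_le zero_le_one, MeasureTheory.integral_Ioc_eq_integral_Ioo]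
  have hid : ∀ x ∈ Ioo (0:ℝ) 1, Real.log (1-x) * Real.log (1+x) / x
      = (1/4) * ((Real.log (1-x^2))^2/x) - (1/4) * ((Real.log ((1-x)/(1+x)))^2/x) := by
    intro x hx
    have hx0 := hx.1
    have hx1 := hx.2
    have hxne : x ≠ 0 := ne_of_gt hx0
    have h1 : (0:ℝ) < 1 - x := by linarith
    have h2 : (0:ℝ) < 1 + x := by linarith
    have e1 : Real.log (1-x^2) = Real.log (1-x) + Real.log (1+x) := by
      rw [show (1:ℝ)-x^2 = (1-x)*(1+x) by ring, Real.log_mul h1.ne' h2.ne']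
    have e2 : Real.log ((1-x)/(1+x)) = Real.log (1-x) - Real.log (1+x) :=
      Real.log_div h1.ne' h2.ne'
    rw [e1, e2]
    field_simp
    ring
  rw [setIntegral_congr_fun measurableSet_Ioo hid]
  rw [integral_sub (J_lemma.1.const_mul _) (K_lemma.1.const_mul _)]
  rw [MeasureTheory.integral_const_mul, MeasureTheory.integral_const_mul, J_lemma.2, K_lemma.2]
  ring
end
end
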